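/- Let G be a group and p a prime such that vβ_p(G) is finite, say vβ_p(G) = r. Then every finite-index subgroup H of G has sectional p-rank u_p(H) ≤ r; that is, for every finite quotient F of H and every p-Sylow subgroup S of F, every subgroup of S can be generated by at most r elements. -/

import Mathlib

open CategoryTheory groupCohomology
open scoped TensorProduct

/-! ## The trivial module `ℤ` over the group ring `ℤ[G]` -/

/-- The integers as a module over the group ring `ℤ[G]`, via the augmentation map. -/
def TrivialZMod (G : Type) [Group G] : Type := ℤ

instance (G : Type) [Group G] : AddCommGroup (TrivialZMod G) :=
  inferInstanceAs (AddCommGroup ℤ)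

noncomputable instance (G : Type) [Group G] : Module (MonoidAlgebra ℤ G) (TrivialZMod G) :=
  Module.compHom ℤ ((MonoidAlgebra.lift ℤ ℤ G 1).toRingHom)

/-- The trivial `ℤ[G]`-module `ℤ` as an object of the category of `ℤ[G]`-modules. -/
noncomputable def trivialModuleCat (G : Type) [Group G] : ModuleCat (MonoidAlgebra ℤ G) :=
  ModuleCat.of _ (TrivialZMod G)

/-! ## Finiteness properties FP and FP₂, and almost coherence -/

/-- A group `G` is of type `FP` (over `ℤ`) if the trivial `ℤ[G]`-module `ℤ` admits a projective
resolution which is finitely generated in each degree and zero in all but finitely many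
degrees. -/
def Group.IsFP (G : Type) [Group G] : Prop :=
  ∃ P : ProjectiveResolution (trivialModuleCat G),
    (∀ n, Module.Finite (MonoidAlgebra ℤ G) (P.complex.X n)) ∧
    ∃ N, ∀ n, N ≤ n → Subsingleton (P.complex.X n)

/-- A group `H` is `FP₂` if the trivial `ℤ[H]`-module `ℤ` admits a partial projective resolution
`P₂ → P₁ → P₀ → ℤ → 0` with each `Pᵢ` a finitely generated projective `ℤ[H]`-module. -/
def Group.IsFP2 (H : Type) [Group H] : Prop :=
  ∃ (P₀ P₁ P₂ : Type) (_ : AddCommGroup P₀) (_ : AddCommGroup P₁) (_ : AddCommGroup P₂)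
    (_ : Module (MonoidAlgebra ℤ H) P₀) (_ : Module (MonoidAlgebra ℤ H) P₁)
    (_ : Module (MonoidAlgebra ℤ H) P₂),
    Module.Finite (MonoidAlgebra ℤ H) P₀ ∧ Module.Projective (MonoidAlgebra ℤ H) P₀ ∧
    Module.Finite (MonoidAlgebra ℤ H) P₁ ∧ Module.Projective (MonoidAlgebra ℤ H) P₁ ∧
    Module.Finite (MonoidAlgebra ℤ H) P₂ ∧ Module.Projective (MonoidAlgebra ℤ H) P₂ ∧
    ∃ (d₂ : P₂ →ₗ[MonoidAlgebra ℤ H] P₁) (d₁ : P₁ →ₗ[MonoidAlgebra ℤ H] P₀)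
      (ε : P₀ →ₗ[MonoidAlgebra ℤ H] TrivialZMod H),
      Function.Surjective ε ∧ LinearMap.range d₁ = LinearMap.ker ε ∧
        LinearMap.range d₂ = LinearMap.ker d₁

/-- A group is almost coherent if each of its finitely generated subgroups is `FP₂`. -/
def Group.IsAlmostCoherent (G : Type) [Group G] : Prop :=
  ∀ H : Subgroup G, H.FG → Group.IsFP2 H

/-! ## Poincaré duality groups of dimension 3 -/

/-- A group `G` is a `PD(3)` group if it is of type `FP`, `H³(G; ℤ[G]) ≅ ℤ` and
`Hⁱ(G; ℤ[G]) = 0` for `i ≠ 3`, where `ℤ[G]` is the left regular representation. -/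
def IsPD3 (G : Type) [Group G] : Prop :=
  Group.IsFP G ∧
    (∀ i, i ≠ 3 → Subsingleton (groupCohomology (Rep.leftRegular ℤ G) i)) ∧
    Nonempty ((groupCohomology (Rep.leftRegular ℤ G) 3) ≃ₗ[ℤ] ℤ)

/-! ## Orientability: the `G`-action on `H³(G; ℤ[G])` -/

/-- Right translation by `g` on the left regular representation `ℤ[G]`, as a morphism of
representations (it commutes with the left translation action). -/
noncomputable def rightTranslation (G : Type) [Group G] (g : G) :
    Rep.leftRegular ℤ G ⟶ Rep.leftRegular ℤ G :=
  Rep.ofHom (LinearMap.intertwiningMap_of_isIntertwiningMap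
    (ρ := Representation.ofMulAction ℤ G G) (σ := Representation.ofMulAction ℤ G G)
    (f := MonoidAlgebra.mapDomainLinearMap ℤ ℤ (fun x : G => x * g)) (by
      intro h v
      induction v using MonoidAlgebra.induction_linear with
      | zero => simp
      | add a b ha hb => simp_all [map_add]
      | single x r => simp [MonoidAlgebra.mapDomainLinearMap, mul_assoc]))

/-- The endomorphism of the complex of inhomogeneous cochains of the left regular representation
induced by right translation by `g`. -/
noncomputable def cochainsRightTranslation (G : Type) [Group G] (g : G) :
    inhomogeneousCochains (Rep.leftRegular ℤ G) ⟶
      inhomogeneousCochains (Rep.leftRegular ℤ G) where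
  f n := ModuleCat.ofHom (((rightTranslation G g).hom.toLinearMap : (Rep.leftRegular ℤ G).V →ₗ[ℤ]
      (Rep.leftRegular ℤ G).V).compLeft (Fin n → G))
  comm' := by
    rintro i j (rfl : i + 1 = j)
    have hcomm : ∀ (h : G) (y : (Rep.leftRegular ℤ G).V),
        (rightTranslation G g).hom ((Rep.leftRegular ℤ G).ρ h y) =
          (Rep.leftRegular ℤ G).ρ h ((rightTranslation G g).hom y) :=
      fun h y => Rep.hom_comm_apply _ h y
    ext φ x
    simp [inhomogeneousCochains.d_hom_apply, LinearMap.compLeft, map_add, map_sum, hcomm]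
    refine Finset.sum_congr rfl fun c _ => ?_
    rw [show ((-1 : MonoidAlgebra ℤ G) ^ ((c : ℕ) + 1)) =
        (((-1 : ℤ) ^ ((c : ℕ) + 1) : ℤ) : MonoidAlgebra ℤ G) by simp,
      ← zsmul_eq_mul, ← zsmul_eq_mul, map_zsmul]

/-- The natural action of `g : G` on the group cohomology `Hⁿ(G; ℤ[G])`, induced by the right
translation action of `G` on the coefficients `ℤ[G]`. -/
noncomputable def cohomologyRightTranslation (G : Type) [Group G] (g : G) (n : ℕ) :
    groupCohomology (Rep.leftRegular ℤ G) n ⟶ groupCohomology (Rep.leftRegular ℤ G) n :=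
  HomologicalComplex.homologyMap (cochainsRightTranslation G g) n

/-- A `PD(3)` group is orientable if the natural `G`-action on `H³(G; ℤ[G])` is trivial. -/
def PD3Orientable (G : Type) [Group G] : Prop :=
  ∀ g : G, cohomologyRightTranslation G g 3 = 𝟙 (groupCohomology (Rep.leftRegular ℤ G) 3)

/-! ## Group-theoretic notions -/

/-- A group contains a subgroup isomorphic to the free group of rank 2. -/
def ContainsRank2Free (G : Type) [Group G] : Prop :=
  ∃ H : Subgroup G, Nonempty (H ≃* FreeGroup (Fin 2))

/-- A group is virtually solvable if it has a solvable subgroup of finite index. -/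
def IsVirtuallySolvable (G : Type) [Group G] : Prop :=
  ∃ H : Subgroup G, H.FiniteIndex ∧ IsSolvable H

/-- A group satisfies the Tits alternative if every finitely generated subgroup either contains
a free group of rank 2 or is virtually solvable. -/
def SatisfiesTitsAlternative (G : Type) [Group G] : Prop :=
  ∀ H : Subgroup G, H.FG → ContainsRank2Free H ∨ IsVirtuallySolvable H

/-- A finitely generated torsion-free group is properly locally cyclic if each of its proper
finitely generated subgroups is cyclic. -/
def ProperlyLocallyCyclic (G : Type) [Group G] : Prop :=
  Group.FG G ∧ (∀ g : G, g ≠ 1 → ¬IsOfFinOrder g) ∧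
    ∀ H : Subgroup G, H ≠ ⊤ → H.FG → IsCyclic H

/-- The rank of `G` is at least `n`: no generating set has fewer than `n` elements. -/
def RankAtLeast (G : Type) [Group G] (n : ℕ) : Prop :=
  ∀ s : Finset G, Subgroup.closure (s : Set G) = ⊤ → n ≤ s.card

/-- The Prüfer rank of `G` is at least `n`: some finitely generated subgroup has rank
at least `n`. -/
def PrueferRankAtLeast (G : Type) [Group G] (n : ℕ) : Prop :=
  ∃ H : Subgroup G, H.FG ∧ ∀ s : Finset G, Subgroup.closure (s : Set G) = H → n ≤ s.card

/-- A group is `k`-free if each of its subgroups generated by at most `k` elements is free. -/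
def IsKFree (G : Type) [Group G] (k : ℕ) : Prop :=
  ∀ H : Subgroup G, (∃ s : Finset G, s.card ≤ k ∧ Subgroup.closure (s : Set G) = H) →
    IsFreeGroup H

/-! ## Betti numbers -/

/-- The mod `p` first Betti number `β_p(G) = dim_{F_p} H₁(G; F_p)`, computed as the
`F_p`-dimension of `(G/[G,G]) ⊗ F_p`. -/
noncomputable def betaMod (p : ℕ) (G : Type) [Group G] : Cardinal :=
  Module.rank (ZMod p) (ZMod p ⊗[ℤ] Additive (Abelianization G))

/-- The mod `p` first Betti number as a natural number (`Module.finrank`). -/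
noncomputable def betaModNat (p : ℕ) (G : Type) [Group G] : ℕ :=
  Module.finrank (ZMod p) (ZMod p ⊗[ℤ] Additive (Abelianization G))

/-- The first Betti number `β(G) = dim_ℚ H₁(G; ℚ)`, computed as the `ℚ`-dimension of
`(G/[G,G]) ⊗ ℚ`. -/
noncomputable def betaRat (G : Type) [Group G] : Cardinal :=
  Module.rank ℚ (ℚ ⊗[ℤ] Additive (Abelianization G))

/-! ## Profinite completion -/

/-- The profinite completion of `G` is infinite: `G` has finite quotients of arbitrarily large
cardinality. -/
def HasInfiniteProfiniteCompletion (G : Type) [Group G] : Prop :=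
  ∀ n : ℕ, ∃ (Q : Type) (_ : Group Q) (_ : Fintype Q) (f : G →* Q),
    Function.Surjective f ∧ n ≤ Fintype.card Q

/-- The profinite completion of `G` is finite: `G` has a smallest finite-index subgroup,
i.e. a finite-index subgroup contained in every finite-index subgroup. -/
def HasFiniteProfiniteCompletion (G : Type) [Group G] : Prop :=
  ∃ H : Subgroup G, H.FiniteIndex ∧ ∀ K : Subgroup G, K.FiniteIndex → H ≤ K

/-! ## Surface groups -/

open scoped commutatorElement

/-- The fundamental group of the closed orientable surface of genus `g`:
`⟨a₁,b₁,…,a_g,b_g ∣ [a₁,b₁]⋯[a_g,b_g]⟩`. -/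
def OrientableSurfaceGroup (g : ℕ) : Type :=
  PresentedGroup
    ({(List.ofFn (fun i : Fin g =>
        ⁅FreeGroup.of (i, false), FreeGroup.of (i, true)⁆)).prod} : Set (FreeGroup (Fin g × Bool)))

noncomputable instance (g : ℕ) : Group (OrientableSurfaceGroup g) :=
  inferInstanceAs (Group (PresentedGroup _))

/-- The fundamental group of the closed non-orientable surface of genus `g`:
`⟨a₁,…,a_g ∣ a₁²⋯a_g²⟩`. -/
def NonorientableSurfaceGroup (g : ℕ) : Type :=
  PresentedGroup
    ({(List.ofFn (fun i : Fin g => FreeGroup.of i ^ 2)).prod} : Set (FreeGroup (Fin g)))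

noncomputable instance (g : ℕ) : Group (NonorientableSurfaceGroup g) :=
  inferInstanceAs (Group (PresentedGroup _))

/-- A surface group: a group isomorphic to the fundamental group of a closed aspherical
surface. -/
def IsSurfaceGroup (S : Type) [Group S] : Prop :=
  (∃ g : ℕ, 1 ≤ g ∧ Nonempty (S ≃* OrientableSurfaceGroup g)) ∨
    (∃ g : ℕ, 2 ≤ g ∧ Nonempty (S ≃* NonorientableSurfaceGroup g))

/-- A group contains a surface group. -/
def ContainsSurfaceGroup (G : Type) [Group G] : Prop :=
  ∃ H : Subgroup G, IsSurfaceGroup H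


/-- The sectional `p`-rank of `H` is at most `r`: for every finite quotient `F` of `H`, every
`p`-Sylow subgroup `S` of `F`, and every subgroup `T` of `S`, `T` can be generated by at most
`r` elements. -/
def SectionalPRankAtMost (H : Type) [Group H] (p : ℕ) (r : ℕ) : Prop :=
  ∀ (F : Type) [Group F] [Fintype F], ∀ f : H →* F, Function.Surjective f →
    ∀ S : Sylow p F, ∀ T : Subgroup (S : Subgroup F),
      ∃ s : Finset (S : Subgroup F), s.card ≤ r ∧
        Subgroup.closure (s : Set (S : Subgroup F)) = T

/-- `PSL(2,ℂ)`: the quotient of `SL(2,ℂ)` by its center `{±I}`. -/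
abbrev PSL2C : Type :=
  Matrix.SpecialLinearGroup (Fin 2) ℂ ⧸ Subgroup.center (Matrix.SpecialLinearGroup (Fin 2) ℂ)

/-- A representation `ρ : G → PSL(2,ℂ)` is strictly irreducible if the induced action on `ℂP¹`
has no nonempty invariant subset with fewer than three points.  Points of `ℂP¹` are the
`1`-dimensional subspaces of `ℂ²`, on which `PSL(2,ℂ)` acts via any lift to `SL(2,ℂ)`. -/
def StrictlyIrreducible {G : Type} [Group G] (ρ : G →* PSL2C) : Prop :=
  ¬∃ S : Finset (Submodule ℂ (Fin 2 → ℂ)),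
      S.Nonempty ∧ S.card ≤ 2 ∧ (∀ L ∈ S, Module.finrank ℂ L = 1) ∧
      ∀ (γ : G) (A : Matrix.SpecialLinearGroup (Fin 2) ℂ),
        (QuotientGroup.mk A : PSL2C) = ρ γ →
          ∀ L ∈ S, Submodule.map (Matrix.mulVecLin (A : Matrix (Fin 2) (Fin 2) ℂ)) L ∈ S

/-- Two homomorphisms to `PSL(2,ℂ)` are conjugate in `PSL(2,ℂ)`. -/
def ConjugateReps {G : Type} [Group G] (ρ₁ ρ₂ : G →* PSL2C) : Prop :=
  ∃ c : PSL2C, ∀ γ : G, ρ₂ γ = c * ρ₁ γ * c⁻¹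

/-!
Burnside's basis theorem, in the form needed here: if `T` is a finite `p`-group, elements of `T`
whose images span `H₁(T; 𝔽_p)` generate `T`. Otherwise they lie in a maximal subgroup, which is
normal of index `p`, hence the kernel of a nontrivial homomorphism `T → 𝔽_p`; such a homomorphism
factors through `H₁(T; 𝔽_p)` and would vanish on a spanning set. So `T` needs at most
`β_p(T)` generators.

A subgroup `T` of a Sylow subgroup of a finite quotient `F` of `H` is a quotient of the preimage
`K ≤ H` of `T`, which has finite index in `G`; hence `β_p(T) ≤ β_p(K) ≤ r`.
-/

theorem Abelianization.of_surjective {G : Type*} [Group G] :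
    Function.Surjective (Abelianization.of : G →* Abelianization G) :=
  QuotientGroup.mk'_surjective _

abbrev H1ModP (p : ℕ) (G : Type*) [Group G] : Type _ := ZMod p ⊗[ℤ] Additive (Abelianization G)

namespace H1ModP

variable (p : ℕ) {G G' : Type*} [Group G] [Group G']

def of (g : G) : H1ModP p G := 1 ⊗ₜ Additive.ofMul (Abelianization.of g)

noncomputable def map (f : G →* G') : H1ModP p G →ₗ[ZMod p] H1ModP p G' :=
  (Abelianization.map f).toAdditive.toIntLinearMap.baseChange (ZMod p)

noncomputable def lift (φ : G →* Multiplicative (ZMod p)) : H1ModP p G →ₗ[ZMod p] ZMod p :=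
  LinearMap.liftBaseChange (ZMod p) (Abelianization.lift φ).toAdditiveLeft.toIntLinearMap

theorem lift_of (φ : G →* Multiplicative (ZMod p)) (g : G) :
    lift p φ (of p g) = (φ g).toAdd := by
  simp [lift, of]

theorem span_range_of : Submodule.span (ZMod p) (Set.range (of p : G → H1ModP p G)) = ⊤ := by
  have hspan := (⊤ : Submodule ℤ (Additive (Abelianization G))).baseChange_eq_span (A := ZMod p)
  rw [Submodule.baseChange_top] at hspan
  rw [hspan]
  congr 1
  ext x
  simpa [of] using (Abelianization.of_surjective.exists
    (p := fun a : Abelianization G ↦ (1 : ZMod p) ⊗ₜ[ℤ] Additive.ofMul a = x)).symm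

theorem map_surjective {f : G →* G'} (hf : Function.Surjective f) :
    Function.Surjective (map p f) :=
  LinearMap.baseChange_surjective _ <| by
    rintro ⟨x⟩
    obtain ⟨g, rfl⟩ := hf x
    exact ⟨Additive.ofMul (Abelianization.of g), rfl⟩

theorem eq_one_of_span_image_of_eq_top {s : Set G} (hs : Submodule.span (ZMod p) (of p '' s) = ⊤)
    {φ : G →* Multiplicative (ZMod p)} (hφ : ∀ g ∈ s, φ g = 1) : φ = 1 := by
  have hlift : lift p φ = 0 := by
    refine LinearMap.ext_on hs fun x ⟨g, hg, hx⟩ ↦ ?_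
    simp [← hx, lift_of, hφ g hg]
  ext g
  simpa [lift_of] using LinearMap.congr_fun hlift (of p g)

end H1ModP

theorem betaMod_le_of_surjective {G G' : Type} [Group G] [Group G'] (p : ℕ) {f : G →* G'}
    (hf : Function.Surjective f) : betaMod p G' ≤ betaMod p G :=
  LinearMap.rank_le_of_surjective _ (H1ModP.map_surjective p hf)

namespace IsPGroup

variable {p : ℕ} [Fact p.Prime] {T : Type*} [Group T] [Finite T]

theorem card_quotient_eq_of_isCoatom (hT : IsPGroup p T) {M : Subgroup T} [M.Normal]
    (hM : IsCoatom M) : Nat.card (T ⧸ M) = p := by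
  obtain ⟨x, hx⟩ := exists_prime_orderOf_dvd_card' (G := T ⧸ M) p
    ((hT.to_quotient M).card_eq_or_dvd.resolve_left (Subgroup.index_eq_one.not.mpr hM.1))
  have hx1 : x ≠ 1 := fun h ↦ (Fact.out : p.Prime).ne_one (by rw [← hx, h, orderOf_one])
  have hzpowers : Subgroup.zpowers x = ⊤ := by
    have hlt : M < (Subgroup.zpowers x).comap (QuotientGroup.mk' M) := by
      have hbot : (⊥ : Subgroup (T ⧸ M)).comap (QuotientGroup.mk' M) = M := by
        rw [MonoidHom.comap_bot, QuotientGroup.ker_mk']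
      refine hbot.symm.trans_lt ((Subgroup.comap_lt_comap_of_surjective
        (QuotientGroup.mk'_surjective M)).mpr ?_)
      exact bot_lt_iff_ne_bot.mpr (Subgroup.zpowers_eq_bot.not.mpr hx1)
    apply Subgroup.comap_injective (QuotientGroup.mk'_surjective M)
    rw [hM.lt_iff.mp hlt, Subgroup.comap_top]
  rw [← hx, ← Nat.card_zpowers, hzpowers, Subgroup.card_top]

theorem exists_ne_one_le_ker (hT : IsPGroup p T) {N : Subgroup T} (hN : N ≠ ⊤) :
    ∃ φ : T →* Multiplicative (ZMod p), φ ≠ 1 ∧ N ≤ φ.ker := by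
  obtain ⟨M, hM, hNM⟩ := (eq_top_or_exists_le_coatom N).resolve_left hN
  have := hT.isNilpotent
  have : M.Normal :=
    Subgroup.NormalizerCondition.normal_of_coatom M Group.normalizerCondition_of_isNilpotent hM
  let e : T ⧸ M ≃* Multiplicative (ZMod p) :=
    mulEquivOfPrimeCardEq (hT.card_quotient_eq_of_isCoatom hM) (by simp)
  let φ : T →* Multiplicative (ZMod p) := (e : T ⧸ M →* _).comp (QuotientGroup.mk' M)
  have hker : φ.ker = M := by
    rw [MonoidHom.ker_mulEquiv_comp, QuotientGroup.ker_mk']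
  refine ⟨φ, fun h ↦ hM.1 ?_, hker.symm ▸ hNM⟩
  rw [← hker, h, MonoidHom.ker_one]

end IsPGroup

theorem IsPGroup.exists_finset_card_le_closure_eq_top {p r : ℕ} [Fact p.Prime] {T : Type}
    [Group T] [Finite T] (hT : IsPGroup p T) (hβ : betaMod p T ≤ r) :
    ∃ s : Finset T, s.card ≤ r ∧ Subgroup.closure (s : Set T) = ⊤ := by
  classical
  obtain ⟨κ, a, ha, hspan, hli⟩ := exists_linearIndependent' (ZMod p) (H1ModP.of p : T → _)
  rw [H1ModP.span_range_of] at hspan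
  have : Fintype κ := have : Finite κ := Finite.of_injective a ha; Fintype.ofFinite κ
  refine ⟨(Set.range a).toFinset, ?_, ?_⟩
  · rw [Set.toFinset_card, Set.card_range_of_injective ha, ← Nat.card_eq_fintype_card]
    exact_mod_cast (Nat.cast_card (α := κ)).trans_le (hli.cardinal_le_rank.trans hβ)
  · by_contra hN
    obtain ⟨φ, hφ, hle⟩ := hT.exists_ne_one_le_ker hN
    refine hφ (H1ModP.eq_one_of_span_image_of_eq_top p (s := Set.range a) ?_ fun g hg ↦ ?_)
    · rwa [← Set.range_comp]
    · exact hle (Subgroup.subset_closure (by simpa using hg))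

theorem Subgroup.exists_finiteIndex_surjective_to_subgroup {G : Type*} [Group G]
    {H : Subgroup G} [H.FiniteIndex] {F : Type*} [Group F] [Finite F] {f : H →* F}
    (hf : Function.Surjective f) (P : Subgroup F) :
    ∃ K : Subgroup G, K.FiniteIndex ∧ ∃ ρ : K →* P, Function.Surjective ρ := by
  let e := (P.comap f).equivMapOfInjective H.subtype H.subtype_injective
  refine ⟨(P.comap f).map H.subtype, ⟨?_⟩, (f.subgroupComap P).comp e.symm.toMonoidHom,
    (f.subgroupComap_surjective_of_surjective P hf).comp e.symm.surjective⟩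
  rw [Subgroup.index_map_subtype, P.index_comap_of_surjective hf]
  exact mul_ne_zero Subgroup.FiniteIndex.index_ne_zero Subgroup.FiniteIndex.index_ne_zero

/-- If `vβ_p(G) ≤ r`, then every finite-index subgroup `H` of `G` has sectional `p`-rank at
most `r`. -/
theorem sectional_p_rank_le_of_vbeta_le
    (G : Type) [Group G] (p : ℕ) (hp : p.Prime) (r : ℕ)
    (hr : ∀ K : Subgroup G, K.FiniteIndex → betaMod p K ≤ (r : Cardinal))
    (H : Subgroup G) (hH : H.FiniteIndex) :
    SectionalPRankAtMost H p r := by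
  intro F _ _ f hf S T
  have : Fact p.Prime := ⟨hp⟩
  obtain ⟨K, hK, ρ, hρ⟩ :=
    Subgroup.exists_finiteIndex_surjective_to_subgroup hf (T.map (S : Subgroup F).subtype)
  let e := T.equivMapOfInjective _ (S : Subgroup F).subtype_injective
  have hβ : betaMod p T ≤ r :=
    (betaMod_le_of_surjective p (f := e.symm.toMonoidHom.comp ρ) (e.symm.surjective.comp hρ)).trans
      (hr K hK)
  obtain ⟨s, hs, hclosure⟩ := (S.isPGroup'.to_subgroup T).exists_finset_card_le_closure_eq_top hβ
  refine ⟨s.map (Function.Embedding.subtype _), by simpa using hs, ?_⟩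
  rw [Finset.coe_map, Function.Embedding.coe_subtype, ← T.coe_subtype, ← MonoidHom.map_closure,
    hclosure, ← MonoidHom.range_eq_map, T.range_subtype]
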